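/- arXiv:2603.14830 — 3 statements merged into one kernel-verified Lean document; each statement's English description precedes it below -/
import Mathlib

section
/- Let h(z) = (1/γ) log(1 + exp(γ z)) be the softplus function with parameter γ > 0. Then ∫_{ℝ} h''(t)² dt = γ/6. -/
open MeasureTheory Real

/-- For the softplus `h(z) = γ⁻¹ log(1 + exp(γ z))` with `γ > 0`,
`∫_ℝ h''(t)² dt = γ/6`. -/
theorem stmt_1 (γ : ℝ) (hγ : 0 < γ) (h : ℝ → ℝ)
    (hh : ∀ z : ℝ, h z = γ⁻¹ * Real.log (1 + Real.exp (γ * z))) :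
    ∫ t : ℝ, (deriv (deriv h) t) ^ 2 = γ / 6 := by
  have hfun : h = fun z => γ⁻¹ * Real.log (1 + Real.exp (γ * z)) := funext hh
  set E : ℝ → ℝ := fun t => Real.exp (γ * t) with hE
  have hEpos : ∀ t, 0 < E t := fun t => exp_pos _
  have hpos : ∀ t, 0 < 1 + E t := fun t => by have := hEpos t; linarith
  have hEderiv : ∀ t, HasDerivAt E (γ * E t) t := fun t => by
    exact ((Real.hasDerivAt_exp (γ * t)).comp t ((hasDerivAt_id t).const_mul γ)).congr_deriv
      (by simp only [hE, mul_one]; ring)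
  -- first derivative
  have hd1 : ∀ t, HasDerivAt h (E t / (1 + E t)) t := fun t => by
    rw [hfun]
    have H := (((hEderiv t).const_add 1).log (hpos t).ne').const_mul γ⁻¹
    refine H.congr_deriv ?_
    field_simp
  have hderiv1 : deriv h = fun t => E t / (1 + E t) := funext fun t => (hd1 t).deriv
  -- second derivative
  have hσ : ∀ t, HasDerivAt (fun t => E t / (1 + E t)) (γ * E t / (1 + E t) ^ 2) t := fun t => by
    have H := (hEderiv t).div ((hEderiv t).const_add 1) (hpos t).ne'
    refine H.congr_deriv ?_
    field_simp
    ring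
  have hd2 : ∀ t, HasDerivAt (deriv h) (γ * E t / (1 + E t) ^ 2) t := fun t => by
    rw [hderiv1]; exact hσ t
  have hderiv2 : deriv (deriv h) = fun t => γ * E t / (1 + E t) ^ 2 :=
    funext fun t => (hd2 t).deriv
  set f' : ℝ → ℝ := fun t => (γ * E t / (1 + E t) ^ 2) ^ 2 with hf'
  set σ : ℝ → ℝ := fun t => E t / (1 + E t) with hσdef
  set F : ℝ → ℝ := fun t => γ * ((σ t) ^ 2 / 2 - (σ t) ^ 3 / 3) with hFdef
  have hF : ∀ t, HasDerivAt F (f' t) t := fun t => by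
    have H := ((((hσ t).pow 2).div_const 2).sub (((hσ t).pow 3).div_const 3)).const_mul γ
    refine H.congr_deriv ?_
    have h1 := (hpos t).ne'
    have h2 := (hEpos t).ne'
    simp only [hf', hσdef, Nat.cast_ofNat, pow_succ, pow_zero, one_mul]
    field_simp
    ring
  -- integrability
  have hEc : Continuous E := Real.continuous_exp.comp (continuous_const.mul continuous_id)
  have hcont : Continuous f' :=
    ((continuous_const.mul hEc).div ((continuous_const.add hEc).pow 2)
      (fun t => by exact pow_ne_zero _ (hpos t).ne')).pow 2
  have key : ∀ t, f' t ≤ γ ^ 2 * Real.exp (-(2 * γ) * t) := fun t => by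
    have h1 : Real.exp (-(2 * γ) * t) = ((E t)⁻¹) ^ 2 := by
      rw [hE, ← Real.exp_neg, ← Real.exp_nat_mul]
      ring_nf
    rw [h1, hf']
    have hEt := hEpos t
    have hq : γ * E t / (1 + E t) ^ 2 ≤ γ * (E t)⁻¹ := by
      rw [div_le_iff₀ (by positivity)]
      have : E t ^ 2 ≤ (1 + E t) ^ 2 := by nlinarith
      calc γ * E t = γ * (E t)⁻¹ * E t ^ 2 := by field_simp
        _ ≤ γ * (E t)⁻¹ * (1 + E t) ^ 2 := by
            apply mul_le_mul_of_nonneg_left this; positivity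
    calc (γ * E t / (1 + E t) ^ 2) ^ 2 ≤ (γ * (E t)⁻¹) ^ 2 := by
          apply pow_le_pow_left₀ (by positivity) hq
      _ = γ ^ 2 * ((E t)⁻¹) ^ 2 := by ring
  have hf'nonneg : ∀ t, 0 ≤ f' t := fun t => sq_nonneg _
  have hIoi : IntegrableOn f' (Set.Ioi (0 : ℝ)) := by
    have hg : IntegrableOn (fun t => γ ^ 2 * Real.exp (-(2 * γ) * t)) (Set.Ioi (0 : ℝ)) :=
      (exp_neg_integrableOn_Ioi 0 (by positivity)).const_mul (γ ^ 2)
    refine hg.mono' hcont.aestronglyMeasurable.restrict ?_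
    filter_upwards with t
    rw [Real.norm_eq_abs, abs_of_nonneg (hf'nonneg t)]
    exact key t
  have heven : ∀ t, f' (-t) = f' t := fun t => by
    have hEt := hEpos t
    have h1 : E (-t) = (E t)⁻¹ := by
      rw [hE]; simp only [mul_neg, Real.exp_neg]
    rw [hf']
    simp only [h1]
    field_simp
    ring
  have hIio : IntegrableOn f' (Set.Iio (0 : ℝ)) := by
    have H := (hIoi.integrable_indicator measurableSet_Ioi).comp_neg
    have heq : (fun t => (Set.Ioi (0:ℝ)).indicator f' (-t)) = (Set.Iio (0:ℝ)).indicator f' := by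
      funext t
      by_cases ht : t < 0
      · rw [Set.indicator_of_mem (by simpa using ht), Set.indicator_of_mem (by simpa using ht)]
        exact heven t
      · rw [Set.indicator_of_notMem (by simpa using ht),
          Set.indicator_of_notMem (by simpa using ht)]
    rw [heq] at H
    exact (integrable_indicator_iff measurableSet_Iio).mp H
  have hint : Integrable f' := by
    rw [← integrableOn_univ, ← Set.Iio_union_Ici (a := (0:ℝ))]
    exact hIio.union ((integrableOn_Ici_iff_integrableOn_Ioi).mpr hIoi)
  -- limits
  have hEtop : Filter.Tendsto E Filter.atTop Filter.atTop :=
    Real.tendsto_exp_atTop.comp (Filter.Tendsto.const_mul_atTop hγ Filter.tendsto_id)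
  have hσtop : Filter.Tendsto σ Filter.atTop (nhds 1) := by
    have hσeq : σ = fun t => 1 - (1 + E t)⁻¹ := by
      funext t; rw [hσdef]; have := (hpos t).ne'; field_simp
      ring
    rw [hσeq]
    have : Filter.Tendsto (fun t => (1 + E t)⁻¹) Filter.atTop (nhds 0) :=
      (Filter.tendsto_atTop_add_const_left _ 1 hEtop).inv_tendsto_atTop
    simpa using tendsto_const_nhds.sub this
  have hFtop : Filter.Tendsto F Filter.atTop (nhds (γ / 6)) := by
    have H := ((((hσtop.pow 2).div_const 2).sub ((hσtop.pow 3).div_const 3)).const_mul γ)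
    convert H using 2
    norm_num
    ring
  have hEbot : Filter.Tendsto E Filter.atBot (nhds 0) :=
    Real.tendsto_exp_atBot.comp (Filter.Tendsto.const_mul_atBot hγ Filter.tendsto_id)
  have hσbot : Filter.Tendsto σ Filter.atBot (nhds 0) := by
    have h1 : Filter.Tendsto (fun t => 1 + E t) Filter.atBot (nhds 1) := by
      simpa using tendsto_const_nhds.add hEbot
    have H := hEbot.div h1 one_ne_zero
    rw [zero_div] at H
    exact H
  have hFbot : Filter.Tendsto F Filter.atBot (nhds 0) := by
    have H := ((((hσbot.pow 2).div_const 2).sub ((hσbot.pow 3).div_const 3)).const_mul γ)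
    simpa using H
  have main := integral_of_hasDerivAt_of_tendsto hF hint hFbot hFtop
  rw [hderiv2]
  simpa using main
end

section
/- Let h : ℝ → ℝ satisfy sup_{|z|≤1} |h'(z)| ≤ M₁, let d ≥ 3, let β, x̃ ∈ S^{d−1}, and let k ≥ 0 be an integer. Then for w uniform on S^{d−1}, |E_w[⟨β, w⟩^k h'(⟨w, x̃⟩)]| ≤ C(k) M₁ d^{−k/2} for a constant C(k) depending only on k. -/
open MeasureTheory ProbabilityTheory Finset

open Real
open scoped ENNReal NNReal

lemma gauss_integral_eq (f : ℝ → ℝ) :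
    ∫ x, f x ∂(gaussianReal 0 1) = ∫ x, gaussianPDFReal 0 1 x * f x := by
  rw [gaussianReal_of_var_ne_zero 0 one_ne_zero]
  have h1 : (gaussianPDF 0 1) = fun x => ((gaussianPDFReal 0 1 x).toNNReal : ℝ≥0∞) := by
    funext x; rw [gaussianPDF_def]; rfl
  rw [h1, integral_withDensity_eq_integral_smul ((measurable_gaussianPDFReal 0 1).real_toNNReal)]
  congr 1; funext x
  simp [NNReal.smul_def, Real.coe_toNNReal _ (gaussianPDFReal_nonneg 0 1 x)]

lemma gauss_integrable_iff (f : ℝ → ℝ) :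
    Integrable f (gaussianReal 0 1) ↔
      Integrable (fun x => gaussianPDFReal 0 1 x * f x) volume := by
  rw [gaussianReal_of_var_ne_zero 0 one_ne_zero]
  have h1 : (gaussianPDF 0 1) = fun x => ((gaussianPDFReal 0 1 x).toNNReal : ℝ≥0∞) := by
    funext x; rw [gaussianPDF_def]; rfl
  rw [h1, integrable_withDensity_iff_integrable_smul
    ((measurable_gaussianPDFReal 0 1).real_toNNReal)]
  constructor <;> intro h <;> refine h.congr (Filter.Eventually.of_forall fun x => ?_) <;>
    simp [NNReal.smul_def, Real.coe_toNNReal _ (gaussianPDFReal_nonneg 0 1 x)]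


lemma gauss_pdf_mul_exp (t x : ℝ) :
    gaussianPDFReal 0 1 x * Real.exp (t * x)
      = Real.exp (t ^ 2 / 2) * gaussianPDFReal t 1 x := by
  simp only [gaussianPDFReal, NNReal.coe_one, mul_one, sub_zero]
  rw [mul_assoc, ← Real.exp_add,
    show Real.exp (t ^ 2 / 2) * ((Real.sqrt (2 * π))⁻¹ * Real.exp (-(x - t) ^ 2 / 2))
      = (Real.sqrt (2 * π))⁻¹ * Real.exp (t ^ 2 / 2 + -(x - t) ^ 2 / 2) from by
        rw [Real.exp_add]; ring]
  congr 1
  ring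

lemma gauss_exp_integrable (t : ℝ) :
    Integrable (fun x => Real.exp (t * x)) (gaussianReal 0 1) := by
  rw [gauss_integrable_iff]
  have : (fun x => gaussianPDFReal 0 1 x * Real.exp (t * x))
      = fun x => Real.exp (t ^ 2 / 2) * gaussianPDFReal t 1 x := by
    funext x; exact gauss_pdf_mul_exp t x
  rw [this]
  exact (ProbabilityTheory.integrable_gaussianPDFReal t 1).const_mul _

lemma gauss_exp_integral (t : ℝ) :
    ∫ x, Real.exp (t * x) ∂(gaussianReal 0 1) = Real.exp (t ^ 2 / 2) := by
  rw [gauss_integral_eq]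
  simp_rw [gauss_pdf_mul_exp t]
  rw [integral_const_mul, ProbabilityTheory.integral_gaussianPDFReal_eq_one t one_ne_zero, mul_one]

lemma sqrt_two_pi_inv_le_one : (Real.sqrt (2 * π))⁻¹ ≤ 1 := by
  refine inv_le_one_of_one_le₀ (Real.one_le_sqrt.mpr ?_)
  nlinarith [Real.pi_gt_three]

lemma gauss_pdf_negsq_le (x : ℝ) :
    gaussianPDFReal 0 1 x * Real.exp (-x ^ 2)
      = (Real.sqrt (2 * π))⁻¹ * Real.exp (-(3/2) * x ^ 2) := by
  simp only [gaussianPDFReal, NNReal.coe_one, mul_one, sub_zero]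
  rw [mul_assoc, ← Real.exp_add]
  congr 1
  ring

lemma gauss_negsq_integrable :
    Integrable (fun x => Real.exp (-x ^ 2)) (gaussianReal 0 1) := by
  rw [gauss_integrable_iff]
  have : (fun x => gaussianPDFReal 0 1 x * Real.exp (-x ^ 2))
      = fun x => (Real.sqrt (2 * π))⁻¹ * Real.exp (-(3/2) * x ^ 2) := by
    funext x; exact gauss_pdf_negsq_le x
  rw [this]
  exact (integrable_exp_neg_mul_sq (b := (3:ℝ)/2) (by norm_num)).const_mul _

lemma gauss_negsq_integral :
    ∫ x, Real.exp (-x ^ 2) ∂(gaussianReal 0 1) = (Real.sqrt 3)⁻¹ := by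
  rw [gauss_integral_eq]
  simp_rw [gauss_pdf_negsq_le]
  rw [integral_const_mul, integral_gaussian]
  rw [← Real.sqrt_inv, ← Real.sqrt_mul (by positivity : (0:ℝ) ≤ (2 * π)⁻¹), ← Real.sqrt_inv]
  congr 1
  have hπ : π ≠ 0 := Real.pi_ne_zero
  field_simp

lemma pi_gauss_integral {d : ℕ} (f : Fin d → ℝ → ℝ) :
    ∫ x : Fin d → ℝ, ∏ i, f i (x i) ∂(Measure.pi fun _ => gaussianReal 0 1)
      = ∏ i, ∫ x, f i x ∂(gaussianReal 0 1) :=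
  MeasureTheory.integral_fin_nat_prod_eq_prod (μ := fun _ => gaussianReal 0 1) f

lemma pi_gauss_integrable {d : ℕ} (f : Fin d → ℝ → ℝ)
    (hf : ∀ i, Integrable (f i) (gaussianReal 0 1)) :
    Integrable (fun x : Fin d → ℝ => ∏ i, f i (x i))
      (Measure.pi fun _ => gaussianReal 0 1) :=
  MeasureTheory.Integrable.fin_nat_prod (μ := fun _ => gaussianReal 0 1) (f := f) hf

lemma abs_pow_le_exp (y : ℝ) (k : ℕ) :
    |y| ^ k ≤ (k.factorial : ℝ) * (Real.exp y + Real.exp (-y)) := by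
  have h1 : |y| ^ k / (k.factorial : ℝ) ≤ Real.exp |y| := by
    have h2 : |y| ^ k / (k.factorial : ℝ)
        ≤ ∑ i ∈ Finset.range (k + 1), |y| ^ i / (i.factorial : ℝ) := by
      refine Finset.single_le_sum (f := fun i => |y| ^ i / (i.factorial : ℝ))
        (fun i _ => by positivity) (Finset.self_mem_range_succ k)
    exact h2.trans (Real.sum_le_exp_of_nonneg (abs_nonneg y) (k + 1))
  have h3 : Real.exp |y| ≤ Real.exp y + Real.exp (-y) := by
    rcases abs_cases y with ⟨h, _⟩ | ⟨h, _⟩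
    · rw [h]; nlinarith [Real.exp_pos (-y)]
    · rw [h]; nlinarith [Real.exp_pos y]
  have hk : (0:ℝ) < (k.factorial : ℝ) := by exact_mod_cast k.factorial_pos
  rw [div_le_iff₀ hk] at h1
  calc |y| ^ k ≤ Real.exp |y| * (k.factorial : ℝ) := h1
    _ ≤ (k.factorial : ℝ) * (Real.exp y + Real.exp (-y)) := by
        rw [mul_comm]; exact mul_le_mul_of_nonneg_left h3 hk.le

lemma geom_rpow_bound (k : ℕ) {r : ℝ} (h0 : 0 ≤ r) (h1 : r < 1) :
    ∃ C : ℝ, 0 < C ∧ ∀ d : ℕ, 1 ≤ d → r ^ d ≤ C * (d : ℝ) ^ (-(k : ℝ) / 2) := by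
  have hsum : Summable (fun n : ℕ => (n : ℝ) ^ k * r ^ n) := by
    refine summable_pow_mul_geometric_of_norm_lt_one k ?_
    rwa [Real.norm_eq_abs, abs_of_nonneg h0]
  have htend := hsum.tendsto_atTop_zero
  obtain ⟨U, hU⟩ := htend.bddAbove_range
  refine ⟨max U 1, lt_max_of_lt_right one_pos, fun d hd => ?_⟩
  have hd1 : (1:ℝ) ≤ (d : ℝ) := by exact_mod_cast hd
  have hpos : (0:ℝ) < (d : ℝ) ^ (-(k : ℝ) / 2) := Real.rpow_pos_of_pos (by linarith) _
  rw [← div_le_iff₀ hpos] at *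
  have key : r ^ d / (d : ℝ) ^ (-(k : ℝ) / 2) = r ^ d * (d : ℝ) ^ ((k : ℝ) / 2) := by
    rw [div_eq_mul_inv, ← Real.rpow_neg (by linarith), neg_div, neg_neg]
  rw [key]
  have h2 : (d : ℝ) ^ ((k : ℝ) / 2) ≤ (d : ℝ) ^ (k : ℝ) := by
    refine Real.rpow_le_rpow_of_exponent_le hd1 ?_
    have : (0:ℝ) ≤ (k : ℝ) := Nat.cast_nonneg k
    linarith
  have h3 : r ^ d * (d : ℝ) ^ ((k : ℝ) / 2) ≤ (d : ℝ) ^ k * r ^ d := by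
    rw [mul_comm ((d:ℝ) ^ k)]
    refine mul_le_mul_of_nonneg_left ?_ (pow_nonneg h0 d)
    rw [← Real.rpow_natCast (d:ℝ) k]
    exact h2
  refine h3.trans ?_
  exact le_max_of_le_left (hU ⟨d, rfl⟩)

lemma abs_dot_le_one {d : ℕ} (a b : Fin d → ℝ) (ha : ∑ i, a i ^ 2 = 1)
    (hb : ∑ i, b i ^ 2 ≤ 1) : |∑ i, a i * b i| ≤ 1 := by
  have h := Finset.sum_mul_sq_le_sq_mul_sq Finset.univ a b
  rw [ha, one_mul] at h
  exact (sq_le_one_iff_abs_le_one _).mp (h.trans hb)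

lemma inv_sqrt_pow_eq (d k : ℕ) (hd : 0 < d) :
    ((Real.sqrt ((d : ℝ) / 2))⁻¹) ^ k
      = 2 ^ ((k : ℝ) / 2) * (d : ℝ) ^ (-(k : ℝ) / 2) := by
  have hd0 : (0 : ℝ) < (d : ℝ) := by exact_mod_cast hd
  have hd2 : (0 : ℝ) ≤ (d : ℝ) / 2 := by positivity
  rw [Real.sqrt_eq_rpow, ← Real.rpow_neg hd2, ← Real.rpow_natCast (((d:ℝ)/2) ^ (-(1/2 : ℝ))) k,
    ← Real.rpow_mul hd2]
  have he : -(1 / 2 : ℝ) * (k : ℝ) = -(k : ℝ) / 2 := by ring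
  rw [he, Real.div_rpow (le_of_lt hd0) (by norm_num : (0:ℝ) ≤ 2), div_eq_mul_inv,
    ← Real.rpow_neg (by norm_num : (0:ℝ) ≤ 2), mul_comm]
  congr 1
  ring

/-- For `w` uniform on `S^{d−1}` (realized as the pushforward of the standard
Gaussian under normalization), unit vectors `β, x̃`, and `h` with
`sup_{|z|≤1}|h'(z)| ≤ M₁`, we have
`|E_w[⟨β,w⟩^k h'(⟨w,x̃⟩)]| ≤ C(k) M₁ d^{−k/2}` with `C(k)` depending on `k` only. -/
theorem stmt_12 (k : ℕ) :
    ∃ C : ℝ, 0 < C ∧ ∀ (d : ℕ), 3 ≤ d →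
      ∀ (h : ℝ → ℝ) (M₁ : ℝ) (β xt : Fin d → ℝ),
        (∀ z : ℝ, |z| ≤ 1 → |deriv h z| ≤ M₁) →
        (∑ i, (β i) ^ 2 = 1) → (∑ i, (xt i) ^ 2 = 1) →
        |∫ w, (∑ i, β i * w i) ^ k * deriv h (∑ i, w i * xt i)
            ∂(Measure.map (fun x => (Real.sqrt (∑ i, x i ^ 2))⁻¹ • x)
              (Measure.pi fun _ : Fin d => gaussianReal 0 1))|
          ≤ C * M₁ * (d : ℝ) ^ (-(k : ℝ) / 2) := by
  -- the geometric constant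
  have h3pos : (0:ℝ) < Real.sqrt 3 := Real.sqrt_pos.mpr (by norm_num)
  have hexp_lt : Real.exp (1/2 : ℝ) < Real.sqrt 3 := by
    have h1 : Real.exp (1/2 : ℝ) * Real.exp (1/2 : ℝ) = Real.exp 1 := by
      rw [← Real.exp_add]; norm_num
    have h2 : Real.sqrt 3 * Real.sqrt 3 = 3 := Real.mul_self_sqrt (by norm_num)
    nlinarith [Real.exp_one_lt_d9, Real.exp_pos (1/2 : ℝ)]
  have hr0 : (0:ℝ) ≤ Real.exp (1/2 : ℝ) * (Real.sqrt 3)⁻¹ := by positivity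
  have hr1 : Real.exp (1/2 : ℝ) * (Real.sqrt 3)⁻¹ < 1 := by
    rw [← div_eq_mul_inv, div_lt_one h3pos]; exact hexp_lt
  obtain ⟨C₂, hC₂pos, hC₂⟩ := geom_rpow_bound k hr0 hr1
  refine ⟨2 ^ ((k:ℝ)/2) * 4 * k.factorial + C₂, by positivity, ?_⟩
  intro d hd h M₁ β xt hM hβ hxt
  have hM₁0 : (0:ℝ) ≤ M₁ := le_trans (abs_nonneg _) (hM 0 (by norm_num))
  have hd0 : 0 < d := by omega
  have hd0' : (0:ℝ) < (d:ℝ) := by exact_mod_cast hd0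
  set μd := Measure.pi fun _ : Fin d => gaussianReal 0 1 with hμd
  set T : (Fin d → ℝ) → (Fin d → ℝ) :=
    fun x => (Real.sqrt (∑ i, x i ^ 2))⁻¹ • x with hTdef
  set G : (Fin d → ℝ) → ℝ :=
    fun w => (∑ i, β i * w i) ^ k * deriv h (∑ i, w i * xt i) with hGdef
  set s : ℝ := (d : ℝ) ^ (-(k : ℝ) / 2) with hs
  have hspos : 0 < s := Real.rpow_pos_of_pos hd0' _
  have hTmeas : Measurable T := by
    apply measurable_pi_lambda
    intro i
    have hsum : Measurable fun x : Fin d → ℝ => ∑ j, x j ^ 2 :=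
      Finset.measurable_sum _ (fun j _ => (measurable_pi_apply j).pow_const 2)
    exact ((Real.continuous_sqrt.measurable.comp hsum).inv).mul (measurable_pi_apply i)
  have hg_meas : Measurable fun w : Fin d → ℝ => ∑ i, β i * w i :=
    Finset.measurable_sum _ (fun i _ => by fun_prop)
  have hGmeas : Measurable G := by
    have h2 : Measurable fun w : Fin d → ℝ => ∑ i, w i * xt i :=
      Finset.measurable_sum _ (fun i _ => by fun_prop)
    exact (hg_meas.pow_const k).mul ((measurable_deriv h).comp h2)
  rw [MeasureTheory.integral_map hTmeas.aemeasurable hGmeas.aestronglyMeasurable]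
  -- pointwise facts
  have hw_sq : ∀ x : Fin d → ℝ, ∑ i, (T x) i ^ 2 ≤ 1 := by
    intro x
    have hS0 : (0:ℝ) ≤ ∑ i, x i ^ 2 := by positivity
    have heq : ∑ i, (T x) i ^ 2
        = ((Real.sqrt (∑ i, x i ^ 2))⁻¹) ^ 2 * ∑ i, x i ^ 2 := by
      rw [Finset.mul_sum]
      refine Finset.sum_congr rfl fun i _ => ?_
      simp only [hTdef, Pi.smul_apply, smul_eq_mul]
      ring
    rw [heq]
    rcases eq_or_lt_of_le hS0 with hS | hS
    · rw [← hS]; norm_num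
    · rw [inv_pow, Real.sq_sqrt hS0, inv_mul_cancel₀ (ne_of_gt hS)]
  have hdot : ∀ x : Fin d → ℝ,
      ∑ i, β i * (T x) i = (Real.sqrt (∑ i, x i ^ 2))⁻¹ * ∑ i, β i * x i := by
    intro x
    rw [Finset.mul_sum]
    refine Finset.sum_congr rfl fun i _ => ?_
    simp only [hTdef, Pi.smul_apply, smul_eq_mul]
    ring
  have key : ∀ x : Fin d → ℝ, |∑ i, β i * (T x) i| ^ k
      ≤ 2 ^ ((k:ℝ)/2) * s * |∑ i, β i * x i| ^ k
        + Real.exp ((d:ℝ)/2 - ∑ i, x i ^ 2) := by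
    intro x
    by_cases hcase : (d:ℝ)/2 ≤ ∑ i, x i ^ 2
    · have hS0 : (0:ℝ) ≤ ∑ i, x i ^ 2 := by positivity
      have h1 : |∑ i, β i * (T x) i| ^ k
          = ((Real.sqrt (∑ i, x i ^ 2))⁻¹) ^ k * |∑ i, β i * x i| ^ k := by
        rw [hdot x, abs_mul, mul_pow,
          abs_of_nonneg (inv_nonneg.mpr (Real.sqrt_nonneg _))]
      have hsq2 : (0:ℝ) < Real.sqrt ((d:ℝ)/2) := Real.sqrt_pos.mpr (by positivity)
      have hb : (Real.sqrt (∑ i, x i ^ 2))⁻¹ ≤ (Real.sqrt ((d:ℝ)/2))⁻¹ :=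
        inv_anti₀ hsq2 (Real.sqrt_le_sqrt hcase)
      have hc : ((Real.sqrt (∑ i, x i ^ 2))⁻¹) ^ k ≤ ((Real.sqrt ((d:ℝ)/2))⁻¹) ^ k :=
        pow_le_pow_left₀ (inv_nonneg.mpr (Real.sqrt_nonneg _)) hb k
      have h2 : ((Real.sqrt (∑ i, x i ^ 2))⁻¹) ^ k ≤ 2 ^ ((k:ℝ)/2) * s := by
        rw [hs]; exact hc.trans (le_of_eq (inv_sqrt_pow_eq d k hd0))
      calc |∑ i, β i * (T x) i| ^ k
          = ((Real.sqrt (∑ i, x i ^ 2))⁻¹) ^ k * |∑ i, β i * x i| ^ k := h1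
        _ ≤ (2 ^ ((k:ℝ)/2) * s) * |∑ i, β i * x i| ^ k :=
            mul_le_mul_of_nonneg_right h2 (by positivity)
        _ ≤ 2 ^ ((k:ℝ)/2) * s * |∑ i, β i * x i| ^ k
            + Real.exp ((d:ℝ)/2 - ∑ i, x i ^ 2) :=
            le_add_of_nonneg_right (Real.exp_pos _).le
    · push_neg at hcase
      have hb1 : |∑ i, β i * (T x) i| ≤ 1 := abs_dot_le_one β (T x) hβ (hw_sq x)
      have h1 : |∑ i, β i * (T x) i| ^ k ≤ 1 := pow_le_one₀ (abs_nonneg _) hb1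
      have he : (1:ℝ) ≤ Real.exp ((d:ℝ)/2 - ∑ i, x i ^ 2) :=
        Real.one_le_exp (by linarith)
      have hnn : (0:ℝ) ≤ 2 ^ ((k:ℝ)/2) * s * |∑ i, β i * x i| ^ k := by positivity
      linarith
  have habs : ∀ x : Fin d → ℝ, |G (T x)|
      ≤ M₁ * (2 ^ ((k:ℝ)/2) * s * |∑ i, β i * x i| ^ k
        + Real.exp ((d:ℝ)/2 - ∑ i, x i ^ 2)) := by
    intro x
    have hd2 : |deriv h (∑ i, (T x) i * xt i)| ≤ M₁ := by
      refine hM _ ?_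
      have : ∑ i, (T x) i * xt i = ∑ i, xt i * (T x) i :=
        Finset.sum_congr rfl fun i _ => mul_comm _ _
      rw [this]
      exact abs_dot_le_one xt (T x) hxt (hw_sq x)
    have hGTx : |G (T x)| = |∑ i, β i * (T x) i| ^ k * |deriv h (∑ i, (T x) i * xt i)| := by
      rw [hGdef]
      simp only [abs_mul, abs_pow]
    rw [hGTx]
    calc |∑ i, β i * (T x) i| ^ k * |deriv h (∑ i, (T x) i * xt i)|
        ≤ (2 ^ ((k:ℝ)/2) * s * |∑ i, β i * x i| ^ k
            + Real.exp ((d:ℝ)/2 - ∑ i, x i ^ 2)) * M₁ :=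
          mul_le_mul (key x) hd2 (abs_nonneg _)
            (by positivity)
      _ = M₁ * (2 ^ ((k:ℝ)/2) * s * |∑ i, β i * x i| ^ k
            + Real.exp ((d:ℝ)/2 - ∑ i, x i ^ 2)) := mul_comm _ _
  -- exponential integrals on the product space
  have hexp : ∀ c : Fin d → ℝ,
      Integrable (fun x : Fin d → ℝ => Real.exp (∑ i, c i * x i)) μd ∧
      ∫ x, Real.exp (∑ i, c i * x i) ∂μd = Real.exp ((∑ i, (c i) ^ 2) / 2) := by
    intro c
    have hfe : (fun x : Fin d → ℝ => Real.exp (∑ i, c i * x i))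
        = fun x => ∏ i, Real.exp (c i * x i) := by
      funext x; rw [Real.exp_sum]
    constructor
    · rw [hfe]
      exact pi_gauss_integrable _ (fun i => gauss_exp_integrable (c i))
    · rw [hfe,
        show (∫ x : Fin d → ℝ, ∏ i, Real.exp (c i * x i) ∂μd)
          = ∏ i, ∫ t, Real.exp (c i * t) ∂(gaussianReal 0 1)
          from pi_gauss_integral fun i t => Real.exp (c i * t)]
      simp_rw [gauss_exp_integral]
      rw [← Real.exp_sum]
      congr 1
      rw [Finset.sum_div]
  have hneg_sum : ∀ x : Fin d → ℝ, ∑ i, (-β i) * x i = -∑ i, β i * x i := by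
    intro x
    simp only [neg_mul]
    rw [Finset.sum_neg_distrib]
  have hbd_int : Integrable (fun x : Fin d → ℝ =>
      (k.factorial : ℝ) * (Real.exp (∑ i, β i * x i)
        + Real.exp (∑ i, (-β i) * x i))) μd :=
    ((hexp β).1.add (hexp (fun i => -β i)).1).const_mul _
  have hptwise : ∀ x : Fin d → ℝ, |∑ i, β i * x i| ^ k
      ≤ (k.factorial : ℝ) * (Real.exp (∑ i, β i * x i)
        + Real.exp (∑ i, (-β i) * x i)) := by
    intro x
    rw [hneg_sum x]
    exact abs_pow_le_exp _ k
  have hIg : Integrable (fun x : Fin d → ℝ => |∑ i, β i * x i| ^ k) μd := by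
    refine hbd_int.mono' ((hg_meas.abs.pow_const k).aestronglyMeasurable)
      (Filter.Eventually.of_forall fun x => ?_)
    rw [Real.norm_eq_abs, abs_of_nonneg (by positivity)]
    exact hptwise x
  have hexp_half : Real.exp ((1:ℝ)/2) ≤ 2 := by
    have h1 : Real.exp (1/2 : ℝ) * Real.exp (1/2 : ℝ) = Real.exp 1 := by
      rw [← Real.exp_add]; norm_num
    nlinarith [Real.exp_one_lt_d9, Real.exp_pos (1/2 : ℝ)]
  have hIg_val : ∫ x, |∑ i, β i * x i| ^ k ∂μd ≤ 4 * (k.factorial : ℝ) := by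
    have h1 : ∫ x, |∑ i, β i * x i| ^ k ∂μd
        ≤ ∫ x, (k.factorial : ℝ) * (Real.exp (∑ i, β i * x i)
            + Real.exp (∑ i, (-β i) * x i)) ∂μd :=
      integral_mono hIg hbd_int hptwise
    have hβneg : ∑ i, (-β i) ^ 2 = 1 := by
      rw [← hβ]
      exact Finset.sum_congr rfl fun i _ => by ring
    have h2 : ∫ x, ((k.factorial : ℝ) * (Real.exp (∑ i, β i * x i)
        + Real.exp (∑ i, (-β i) * x i))) ∂μd
        = (k.factorial : ℝ) * (Real.exp ((1:ℝ)/2) + Real.exp ((1:ℝ)/2)) := by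
      rw [integral_const_mul, integral_add (hexp β).1 (hexp (fun i => -β i)).1,
        (hexp β).2, (hexp (fun i => -β i)).2, hβ, hβneg]
    rw [h2] at h1
    have hk0 : (0:ℝ) ≤ (k.factorial : ℝ) := Nat.cast_nonneg _
    nlinarith [Real.exp_pos ((1:ℝ)/2)]
  -- the exponential tail term
  have hprod_eq : (fun x : Fin d → ℝ => Real.exp ((d:ℝ)/2 - ∑ i, x i ^ 2))
      = fun x => Real.exp ((d:ℝ)/2) * ∏ i, Real.exp (-(x i) ^ 2) := by
    funext x
    rw [show (d:ℝ)/2 - ∑ i, x i ^ 2 = (d:ℝ)/2 + ∑ i, -(x i) ^ 2 from by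
      rw [Finset.sum_neg_distrib]; ring, Real.exp_add, Real.exp_sum]
  have hIexp : Integrable (fun x : Fin d → ℝ =>
      Real.exp ((d:ℝ)/2 - ∑ i, x i ^ 2)) μd := by
    rw [hprod_eq]
    exact (pi_gauss_integrable (fun _ t => Real.exp (-t ^ 2))
      (fun i => gauss_negsq_integrable)).const_mul _
  have hIexp_val : ∫ x, Real.exp ((d:ℝ)/2 - ∑ i, x i ^ 2) ∂μd
      = (Real.exp (1/2 : ℝ) * (Real.sqrt 3)⁻¹) ^ d := by
    rw [hprod_eq, integral_const_mul,
      show (∫ a : Fin d → ℝ, ∏ i, Real.exp (-(a i) ^ 2) ∂μd)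
        = ∏ _i : Fin d, ∫ t, Real.exp (-t ^ 2) ∂(gaussianReal 0 1)
        from pi_gauss_integral fun _ t => Real.exp (-t ^ 2)]
    simp_rw [gauss_negsq_integral]
    rw [Finset.prod_const, Finset.card_univ, Fintype.card_fin, mul_pow]
    congr 1
    rw [← Real.exp_nat_mul]
    congr 1
    ring
  -- assemble
  have hBint : Integrable (fun x : Fin d → ℝ =>
      M₁ * (2 ^ ((k:ℝ)/2) * s * |∑ i, β i * x i| ^ k
        + Real.exp ((d:ℝ)/2 - ∑ i, x i ^ 2))) μd :=
    ((hIg.const_mul _).add hIexp).const_mul M₁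
  have hGT_int : Integrable (fun x => G (T x)) μd := by
    refine hBint.mono' ((hGmeas.comp hTmeas).aestronglyMeasurable)
      (Filter.Eventually.of_forall fun x => ?_)
    rw [Real.norm_eq_abs]
    exact habs x
  have step1 : |∫ x, G (T x) ∂μd| ≤ ∫ x, |G (T x)| ∂μd := by
    simpa [Real.norm_eq_abs] using
      norm_integral_le_integral_norm (μ := μd) (fun x => G (T x))
  have step2 : ∫ x, |G (T x)| ∂μd
      ≤ ∫ x, M₁ * (2 ^ ((k:ℝ)/2) * s * |∑ i, β i * x i| ^ k
        + Real.exp ((d:ℝ)/2 - ∑ i, x i ^ 2)) ∂μd :=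
    integral_mono hGT_int.abs hBint habs
  have step3 : ∫ x, M₁ * (2 ^ ((k:ℝ)/2) * s * |∑ i, β i * x i| ^ k
        + Real.exp ((d:ℝ)/2 - ∑ i, x i ^ 2)) ∂μd
      = M₁ * (2 ^ ((k:ℝ)/2) * s * (∫ x, |∑ i, β i * x i| ^ k ∂μd)
        + (Real.exp (1/2 : ℝ) * (Real.sqrt 3)⁻¹) ^ d) := by
    rw [integral_const_mul, integral_add (hIg.const_mul _) hIexp, integral_const_mul,
      hIexp_val]
  have step4 : M₁ * (2 ^ ((k:ℝ)/2) * s * (∫ x, |∑ i, β i * x i| ^ k ∂μd)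
        + (Real.exp (1/2 : ℝ) * (Real.sqrt 3)⁻¹) ^ d)
      ≤ (2 ^ ((k:ℝ)/2) * 4 * k.factorial + C₂) * M₁ * s := by
    have e1 : 2 ^ ((k:ℝ)/2) * s * (∫ x, |∑ i, β i * x i| ^ k ∂μd)
        ≤ 2 ^ ((k:ℝ)/2) * s * (4 * (k.factorial : ℝ)) :=
      mul_le_mul_of_nonneg_left hIg_val (by positivity)
    have e2 : (Real.exp (1/2 : ℝ) * (Real.sqrt 3)⁻¹) ^ d ≤ C₂ * s :=
      hC₂ d (by omega)
    calc M₁ * (2 ^ ((k:ℝ)/2) * s * (∫ x, |∑ i, β i * x i| ^ k ∂μd)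
          + (Real.exp (1/2 : ℝ) * (Real.sqrt 3)⁻¹) ^ d)
        ≤ M₁ * (2 ^ ((k:ℝ)/2) * s * (4 * (k.factorial : ℝ)) + C₂ * s) :=
          mul_le_mul_of_nonneg_left (add_le_add e1 e2) hM₁0
      _ = (2 ^ ((k:ℝ)/2) * 4 * k.factorial + C₂) * M₁ * s := by ring
  exact step1.trans (step2.trans (step3.le.trans step4))
end

section
/- Under the setup of the hinge lemma, let C be a finite set containing at least two points in each of the open intervals determined by the sorted hinges (including the two unbounded intervals). Then span{v(s) : s ∈ C} = span{v(s) : s ∈ ℝ}, and consequently rank(K(C)) = max over all finite S ⊂ ℝ of rank(K(S)). -/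
open Finset

/-- Under the hinge-lemma setup, if the finite set `C` contains at least two
points in each open interval determined by the (pairwise distinct, sorted)
hinges — expressed below as: for every non-hinge point `s` there are two
distinct points of `C` joined to `s` by intervals avoiding all hinges — then
`span{v(s) : s ∈ C} = span{v(s) : s ∈ ℝ}`, and consequently the rank of
`K(C)` is maximal among all `K(S)` for finite `S`. -/
theorem stmt_19 (L : ℕ) (c : ℝ) (hc : c ≠ 0) (α b : Fin L → ℝ)
    (v : ℝ → Fin L → ℝ) (hv : ∀ s i, v s i = max (c * α i * s + b i) 0)
    (T : Set ℝ) (hT : T = {x : ℝ | ∃ i : Fin L, α i ≠ 0 ∧ x = -(b i) / (c * α i)})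
    (hdist : ∀ i j : Fin L, α i ≠ 0 → α j ≠ 0 → i ≠ j →
      -(b i) / (c * α i) ≠ -(b j) / (c * α j))
    (C : Finset ℝ)
    (hC : ∀ s : ℝ, s ∉ T → ∃ s₁ s₂ : ℝ, s₁ ∈ C ∧ s₂ ∈ C ∧ s₁ ≠ s₂ ∧
      Set.uIcc s s₁ ∩ T = ∅ ∧ Set.uIcc s s₂ ∩ T = ∅) :
    Submodule.span ℝ (v '' ↑C) = Submodule.span ℝ (Set.range v) ∧
    ∀ S : Finset ℝ,
      Module.finrank ℝ ↥(Submodule.span ℝ (v '' ↑S))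
        ≤ Module.finrank ℝ ↥(Submodule.span ℝ (v '' ↑C)) := by
  -- Step 1: every non-hinge point's value is in the span over C.
  have key1 : ∀ s : ℝ, s ∉ T → v s ∈ Submodule.span ℝ (v '' ↑C) := by
    intro s hs
    obtain ⟨s₁, s₂, h1, h2, hne, hJ1, hJ2⟩ := hC s hs
    have hd : s₂ - s₁ ≠ 0 := sub_ne_zero.mpr hne.symm
    have hv' : v s = ((s₂ - s) / (s₂ - s₁)) • v s₁ + ((s - s₁) / (s₂ - s₁)) • v s₂ := by
      funext i
      simp only [Pi.add_apply, Pi.smul_apply, smul_eq_mul, hv]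
      by_cases hα : α i = 0
      · rw [hα]
        simp only [mul_zero, zero_mul, zero_add]
        field_simp
        ring
      · set t := -(b i) / (c * α i) with ht_def
        have hca : c * α i ≠ 0 := mul_ne_zero hc hα
        have ht : t ∈ T := by rw [hT]; exact ⟨i, hα, rfl⟩
        have hlin : ∀ x : ℝ, c * α i * x + b i = (c * α i) * (x - t) := by
          intro x; rw [ht_def]; field_simp; ring
        have hsign : ∀ x : ℝ, Set.uIcc s x ∩ T = ∅ → 0 < (s - t) * (x - t) := by
          intro x hJ
          have hts : t ∉ Set.uIcc s x := by
            intro h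
            have : t ∈ Set.uIcc s x ∩ T := ⟨h, ht⟩
            rw [hJ] at this
            exact this
          have hst : s ≠ t := fun h => hs (h ▸ ht)
          rw [Set.mem_uIcc] at hts
          push_neg at hts
          rcases lt_or_gt_of_ne hst with h | h
          · have : x < t := hts.1 h.le
            nlinarith
          · have : t < x := by
              by_contra hx
              push_neg at hx
              exact absurd (hts.2 hx) (not_lt.mpr h.le)
            nlinarith
        have hp1 : 0 < (s - t) * (s₁ - t) := hsign s₁ hJ1
        have hp2 : 0 < (s - t) * (s₂ - t) := hsign s₂ hJ2
        rw [hlin s, hlin s₁, hlin s₂]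
        have hq1 : 0 < (c * α i * (s - t)) * (c * α i * (s₁ - t)) := by
          have h := mul_pos (mul_self_pos.mpr hca) hp1
          nlinarith [h]
        have hq2 : 0 < (c * α i * (s - t)) * (c * α i * (s₂ - t)) := by
          have h := mul_pos (mul_self_pos.mpr hca) hp2
          nlinarith [h]
        rcases lt_or_gt_of_ne (mul_ne_zero hca (sub_ne_zero.mpr (fun h => hs (h ▸ ht))) :
            c * α i * (s - t) ≠ 0) with hneg | hpos
        · -- all three linear values negative: max = 0 everywhere
          have hn1 : c * α i * (s₁ - t) < 0 := by nlinarith [hq1]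
          have hn2 : c * α i * (s₂ - t) < 0 := by nlinarith [hq2]
          rw [max_eq_right hneg.le, max_eq_right hn1.le, max_eq_right hn2.le]
          ring
        · -- all three positive: max = linear value everywhere
          have hn1 : 0 < c * α i * (s₁ - t) := by nlinarith [hq1]
          have hn2 : 0 < c * α i * (s₂ - t) := by nlinarith [hq2]
          rw [max_eq_left hpos.le, max_eq_left hn1.le, max_eq_left hn2.le]
          field_simp
          ring
    rw [hv']
    exact Submodule.add_mem _
      (Submodule.smul_mem _ _ (Submodule.subset_span ⟨s₁, h1, rfl⟩))
      (Submodule.smul_mem _ _ (Submodule.subset_span ⟨s₂, h2, rfl⟩))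
  -- Step 2: extend to all points using continuity and finiteness of T.
  have key : ∀ s : ℝ, v s ∈ Submodule.span ℝ (v '' ↑C) := by
    intro s
    by_cases hs : s ∈ T
    · have hTfin : T.Countable := by
        rw [hT]
        apply Set.Countable.mono _ (Set.countable_range fun i => -(b i) / (c * α i))
        rintro x ⟨i, _, rfl⟩
        exact ⟨i, rfl⟩
      have hdense : Dense Tᶜ := hTfin.dense_compl ℝ
      have hcont : Continuous v := by
        have hveq : v = fun s i => max (c * α i * s + b i) 0 := by
          funext s i; exact hv s i
        rw [hveq]
        continuity
      have hclosed : IsClosed ((Submodule.span ℝ (v '' ↑C) : Submodule ℝ (Fin L → ℝ)) :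
          Set (Fin L → ℝ)) :=
        Submodule.closed_of_finiteDimensional _
      have h1 : v s ∈ v '' closure Tᶜ := by
        rw [hdense.closure_eq]; exact ⟨s, trivial, rfl⟩
      have h2 := image_closure_subset_closure_image (s := Tᶜ) hcont
      have h3 : v '' Tᶜ ⊆ ((Submodule.span ℝ (v '' ↑C) : Submodule ℝ (Fin L → ℝ)) :
          Set (Fin L → ℝ)) := by
        rintro _ ⟨x, hx, rfl⟩
        exact key1 x hx
      have := closure_mono h3 (h2 h1)
      rwa [hclosed.closure_eq] at this
    · exact key1 s hs
  constructor
  · apply le_antisymm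
    · exact Submodule.span_mono (Set.image_subset_range _ _)
    · rw [Submodule.span_le]
      rintro _ ⟨s, rfl⟩
      exact key s
  · intro S
    apply Submodule.finrank_mono
    rw [Submodule.span_le]
    rintro _ ⟨s, _, rfl⟩
    exact key s
end
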